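/- Let k be an odd natural number. The family of 2(⌊k/2⌋+1) = k+1 polynomials V_{k,j}^even = (x²+y²)^j W_{k−2j}^even and V_{k,j}^odd = (x²+y²)^j W_{k−2j}^odd, for j = 0, 1, ..., ⌊k/2⌋, forms a basis of the real vector space of homogeneous polynomials of degree k in two variables. -/

import Mathlib

open MvPolynomial Finset

/-- `W_i^even(x,y) = Σ_{s=0}^{⌊i/2⌋} (-1)^s C(i,2s) x^{i-2s} y^{2s}`. -/
noncomputable def Weven (R : Type*) [CommRing R] (i : ℕ) : MvPolynomial (Fin 2) R :=
  ∑ s ∈ Finset.range (i / 2 + 1),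
    MvPolynomial.C ((-1 : R) ^ s * (i.choose (2 * s) : R)) *
      (X 0 ^ (i - 2 * s) * X 1 ^ (2 * s))

/-- `W_i^odd(x,y) = Σ_{s=0}^{⌊(i-1)/2⌋} (-1)^s C(i,2s+1) x^{i-2s-1} y^{2s+1}`. -/
noncomputable def Wodd (R : Type*) [CommRing R] (i : ℕ) : MvPolynomial (Fin 2) R :=
  ∑ s ∈ Finset.range ((i - 1) / 2 + 1),
    MvPolynomial.C ((-1 : R) ^ s * (i.choose (2 * s + 1) : R)) *
      (X 0 ^ (i - (2 * s + 1)) * X 1 ^ (2 * s + 1))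

/-- `V_{k,j}^even = (x²+y²)^j W_{k-2j}^even`. -/
noncomputable def Veven (R : Type*) [CommRing R] (k j : ℕ) : MvPolynomial (Fin 2) R :=
  (X 0 ^ 2 + X 1 ^ 2) ^ j * Weven R (k - 2 * j)

/-- `V_{k,j}^odd = (x²+y²)^j W_{k-2j}^odd`. -/
noncomputable def Vodd (R : Type*) [CommRing R] (k j : ℕ) : MvPolynomial (Fin 2) R :=
  (X 0 ^ 2 + X 1 ^ 2) ^ j * Wodd R (k - 2 * j)

/-- The family `{V_{k,j}^even, V_{k,j}^odd : 0 ≤ j ≤ ⌊k/2⌋}`. -/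
noncomputable def Vfam (k : ℕ) : Fin (k / 2 + 1) × Bool → MvPolynomial (Fin 2) ℝ :=
  fun p => if p.2 then Vodd ℝ k p.1 else Veven ℝ k p.1

/-! ### Auxiliary lemmas -/

lemma sum_range_even_odd {M : Type*} [AddCommMonoid M] (f : ℕ → M) (n : ℕ) :
    ∑ t ∈ range n, f t
      = (∑ s ∈ range ((n + 1) / 2), f (2 * s)) + ∑ s ∈ range (n / 2), f (2 * s + 1) := by
  induction n with
  | zero => simp
  | succ n ih =>
    rcases Nat.even_or_odd n with ⟨a, ha⟩ | ⟨a, ha⟩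
    · have h1 : (n + 1 + 1) / 2 = a + 1 := by omega
      have h2 : (n + 1) / 2 = a := by omega
      have h3 : n / 2 = a := by omega
      rw [Finset.sum_range_succ, ih, h1, h2, h3,
        Finset.sum_range_succ (fun s => f (2 * s)) a, show n = 2 * a by omega]
      abel
    · have h1 : (n + 1 + 1) / 2 = a + 1 := by omega
      have h2 : (n + 1) / 2 = a + 1 := by omega
      have h3 : n / 2 = a := by omega
      rw [Finset.sum_range_succ, ih, h1, h2, h3,
        Finset.sum_range_succ (fun s => f (2 * s + 1)) a, show n = 2 * a + 1 by omega]
      abel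

/-- The key binomial identity: `(x + c y)^m = Weven + c * Wodd` whenever `c² = -1`. -/
lemma key (m : ℕ) (hm : 1 ≤ m) (c : ℂ) (hc : c ^ 2 = -1) :
    (X 0 + C c * X 1 : MvPolynomial (Fin 2) ℂ) ^ m
      = Weven ℂ m + C c * Wodd ℂ m := by
  rw [add_comm (X 0), add_pow]
  rw [sum_range_even_odd
    (fun t => (C c * X 1) ^ t * X 0 ^ (m - t) * (m.choose t : MvPolynomial (Fin 2) ℂ)) (m+1)]
  have h1 : (m + 1 + 1) / 2 = m / 2 + 1 := by omega
  have h2 : (m + 1) / 2 = (m - 1) / 2 + 1 := by omega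
  rw [h1, h2, Weven, Wodd, Finset.mul_sum]
  congr 1
  · apply Finset.sum_congr rfl
    intro s hs
    have : ((-1 : ℂ)) ^ s = c ^ (2 * s) := by
      rw [pow_mul, hc]
    have hcast : ((m.choose (2 * s) : ℕ) : MvPolynomial (Fin 2) ℂ) = C (m.choose (2 * s) : ℂ) := by
      simp
    rw [mul_pow, ← C_pow, map_mul, ← this, hcast]
    ring
  · apply Finset.sum_congr rfl
    intro s hs
    have : (c : ℂ) ^ (2 * s + 1) = (-1 : ℂ) ^ s * c := by
      rw [pow_succ, pow_mul, hc]
    have hcast : ((m.choose (2 * s + 1) : ℕ) : MvPolynomial (Fin 2) ℂ)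
        = C (m.choose (2 * s + 1) : ℂ) := by
      simp
    rw [mul_pow, ← C_pow, map_mul (C : ℂ →+* _), this, hcast]
    simp only [map_mul]
    ring

lemma key' (m : ℕ) (hm : 1 ≤ m) :
    (X 0 - C Complex.I * X 1 : MvPolynomial (Fin 2) ℂ) ^ m
      = Weven ℂ m - C Complex.I * Wodd ℂ m := by
  have h := key m hm (-Complex.I) (by rw [neg_sq, Complex.I_sq])
  rw [map_neg] at h
  rw [sub_eq_add_neg, sub_eq_add_neg, ← neg_mul, h, neg_mul]

/-- The evaluation map sending `x ↦ X + 1`, `y ↦ -i (X - 1)`, so that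
`x + iy ↦ 2X` and `x - iy ↦ 2`. -/
noncomputable def phi : MvPolynomial (Fin 2) ℂ →ₐ[ℂ] Polynomial ℂ :=
  aeval ![Polynomial.X + 1, Polynomial.C (-Complex.I) * (Polynomial.X - 1)]

lemma phi_Z : phi (X 0 + C Complex.I * X 1) = 2 * Polynomial.X := by
  simp only [phi, map_add, map_mul, aeval_X, aeval_C, Polynomial.algebraMap_eq,
    Matrix.cons_val_zero, Matrix.cons_val_one, Matrix.head_cons]
  rw [← mul_assoc, ← Polynomial.C_mul, show Complex.I * -Complex.I = 1 by
    simp [Complex.I_mul_I], Polynomial.C_1, one_mul]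
  ring

lemma phi_W : phi (X 0 - C Complex.I * X 1) = 2 := by
  simp only [phi, map_sub, map_mul, aeval_X, aeval_C, Polynomial.algebraMap_eq,
    Matrix.cons_val_zero, Matrix.cons_val_one, Matrix.head_cons]
  rw [← mul_assoc, ← Polynomial.C_mul, show Complex.I * -Complex.I = 1 by
    simp [Complex.I_mul_I], Polynomial.C_1, one_mul]
  ring

lemma hfac : (X 0 + C Complex.I * X 1) * (X 0 - C Complex.I * X 1)
    = (X 0 ^ 2 + X 1 ^ 2 : MvPolynomial (Fin 2) ℂ) := by
  have hI2 : (C Complex.I : MvPolynomial (Fin 2) ℂ) ^ 2 = -1 := by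
    rw [← map_pow, Complex.I_sq]
    simp
  linear_combination (-(X 1 ^ 2) : MvPolynomial (Fin 2) ℂ) * hI2

lemma phi_P : phi (X 0 ^ 2 + X 1 ^ 2) = 4 * Polynomial.X := by
  rw [← hfac, map_mul, phi_Z, phi_W]
  ring

lemma phi_We (m : ℕ) (hm : 1 ≤ m) :
    phi (Weven ℂ m) = 2 ^ (m - 1) * (Polynomial.X ^ m + 1) := by
  have e1 : (2 * Polynomial.X) ^ m = phi (Weven ℂ m) + Polynomial.C Complex.I * phi (Wodd ℂ m) := by
    rw [← phi_Z, ← map_pow, key m hm Complex.I Complex.I_sq, map_add, map_mul]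
    simp [phi, Polynomial.algebraMap_eq]
  have e2 : (2 : Polynomial ℂ) ^ m = phi (Weven ℂ m) - Polynomial.C Complex.I * phi (Wodd ℂ m) := by
    rw [← phi_W, ← map_pow, key' m hm, map_sub, map_mul]
    simp [phi, Polynomial.algebraMap_eq]
  have h2m : (2 : Polynomial ℂ) * 2 ^ (m - 1) = 2 ^ m := by
    rw [← pow_succ']
    congr 1
    omega
  apply mul_left_cancel₀ (two_ne_zero (α := Polynomial ℂ))
  linear_combination -e1 - e2 - (Polynomial.X ^ m + 1) * h2m

lemma phi_Wo (m : ℕ) (hm : 1 ≤ m) :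
    phi (Wodd ℂ m) = Polynomial.C (-Complex.I) * (2 ^ (m - 1) * (Polynomial.X ^ m - 1)) := by
  have e1 : (2 * Polynomial.X) ^ m = phi (Weven ℂ m) + Polynomial.C Complex.I * phi (Wodd ℂ m) := by
    rw [← phi_Z, ← map_pow, key m hm Complex.I Complex.I_sq, map_add, map_mul]
    simp [phi, Polynomial.algebraMap_eq]
  have e2 : (2 : Polynomial ℂ) ^ m = phi (Weven ℂ m) - Polynomial.C Complex.I * phi (Wodd ℂ m) := by
    rw [← phi_W, ← map_pow, key' m hm, map_sub, map_mul]
    simp [phi, Polynomial.algebraMap_eq]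
  have h2m : (2 : Polynomial ℂ) * 2 ^ (m - 1) = 2 ^ m := by
    rw [← pow_succ']
    congr 1
    omega
  have hII : (Polynomial.C Complex.I) * Polynomial.C (-Complex.I) = 1 := by
    rw [← Polynomial.C_mul]
    simp [Complex.I_mul_I]
  have hc : (2 : Polynomial ℂ) * Polynomial.C Complex.I ≠ 0 := by
    simp [Complex.I_ne_zero]
  apply mul_left_cancel₀ hc
  linear_combination -e1 + e2 - (2 * (2:Polynomial ℂ) ^ (m-1) * (Polynomial.X ^ m - 1)) * hII
    - (Polynomial.X ^ m - 1) * h2m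

lemma map_Weven (m : ℕ) :
    MvPolynomial.map (algebraMap ℝ ℂ) (Weven ℝ m) = Weven ℂ m := by
  simp [Weven, map_sum, MvPolynomial.map_C, MvPolynomial.map_X]

lemma map_Wodd (m : ℕ) :
    MvPolynomial.map (algebraMap ℝ ℂ) (Wodd ℝ m) = Wodd ℂ m := by
  simp [Wodd, map_sum, MvPolynomial.map_C, MvPolynomial.map_X]

lemma psi_even (k j : ℕ) (hk : k % 2 = 1) (hj : j ≤ k / 2) :
    phi (MvPolynomial.map (algebraMap ℝ ℂ) (Veven ℝ k j))
      = Polynomial.C ((2:ℂ) ^ (k - 1)) * (Polynomial.X ^ (k - j) + Polynomial.X ^ j) := by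
  have hm : 1 ≤ k - 2 * j := by omega
  rw [Veven, map_mul, map_pow, map_add, map_pow, map_pow, MvPolynomial.map_X,
    MvPolynomial.map_X, map_Weven, map_mul, map_pow, phi_P, phi_We _ hm]
  have e1 : (Polynomial.X : Polynomial ℂ) ^ j * Polynomial.X ^ (k - 2 * j)
      = Polynomial.X ^ (k - j) := by
    rw [← pow_add]
    congr 1
    omega
  have e2 : ((4:ℂ)) ^ j * 2 ^ (k - 2 * j - 1) = (2:ℂ) ^ (k - 1) := by
    rw [show (4:ℂ) = 2 ^ 2 by norm_num, ← pow_mul, ← pow_add]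
    congr 1
    omega
  have h4 : (4 : Polynomial ℂ) = Polynomial.C (4:ℂ) := (map_ofNat Polynomial.C 4).symm
  have h2 : (2 : Polynomial ℂ) = Polynomial.C (2:ℂ) := (map_ofNat Polynomial.C 2).symm
  have e2' : Polynomial.C ((4:ℂ) ^ j) * Polynomial.C ((2:ℂ) ^ (k - 2 * j - 1))
      = Polynomial.C ((2:ℂ) ^ (k - 1)) := by
    rw [← Polynomial.C_mul, e2]
  rw [mul_pow, h4, h2, ← map_pow, ← map_pow]
  linear_combination (Polynomial.X ^ j * Polynomial.X ^ (k - 2 * j) + Polynomial.X ^ j) * e2'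
    + Polynomial.C ((2:ℂ) ^ (k - 1)) * e1

lemma psi_odd (k j : ℕ) (hk : k % 2 = 1) (hj : j ≤ k / 2) :
    phi (MvPolynomial.map (algebraMap ℝ ℂ) (Vodd ℝ k j))
      = Polynomial.C ((2:ℂ) ^ (k - 1) * (-Complex.I))
          * (Polynomial.X ^ (k - j) - Polynomial.X ^ j) := by
  have hm : 1 ≤ k - 2 * j := by omega
  rw [Vodd, map_mul, map_pow, map_add, map_pow, map_pow, MvPolynomial.map_X,
    MvPolynomial.map_X, map_Wodd, map_mul, map_pow, phi_P, phi_Wo _ hm]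
  have e1 : (Polynomial.X : Polynomial ℂ) ^ j * Polynomial.X ^ (k - 2 * j)
      = Polynomial.X ^ (k - j) := by
    rw [← pow_add]
    congr 1
    omega
  have e2 : ((4:ℂ)) ^ j * 2 ^ (k - 2 * j - 1) = (2:ℂ) ^ (k - 1) := by
    rw [show (4:ℂ) = 2 ^ 2 by norm_num, ← pow_mul, ← pow_add]
    congr 1
    omega
  have h4 : (4 : Polynomial ℂ) = Polynomial.C (4:ℂ) := (map_ofNat Polynomial.C 4).symm
  have h2 : (2 : Polynomial ℂ) = Polynomial.C (2:ℂ) := (map_ofNat Polynomial.C 2).symm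
  have e2' : Polynomial.C ((4:ℂ) ^ j) * Polynomial.C ((2:ℂ) ^ (k - 2 * j - 1))
      = Polynomial.C ((2:ℂ) ^ (k - 1)) := by
    rw [← Polynomial.C_mul, e2]
  have e3 : Polynomial.C ((2:ℂ) ^ (k - 1)) * Polynomial.C (-Complex.I)
      = Polynomial.C ((2:ℂ) ^ (k - 1) * (-Complex.I)) := by
    rw [← Polynomial.C_mul]
  rw [mul_pow, h4, h2, ← map_pow, ← map_pow]
  linear_combination (Polynomial.C (-Complex.I)
        * (Polynomial.X ^ j * Polynomial.X ^ (k - 2 * j) - Polynomial.X ^ j)) * e2'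
    + (Polynomial.X ^ j * Polynomial.X ^ (k - 2 * j) - Polynomial.X ^ j) * e3
    + Polynomial.C ((2:ℂ) ^ (k - 1) * (-Complex.I)) * e1

lemma weven_hom (m : ℕ) : (Weven ℝ m).IsHomogeneous m := by
  apply MvPolynomial.IsHomogeneous.sum
  intro s hs
  rw [Finset.mem_range] at hs
  have h1 := (isHomogeneous_C (Fin 2) ((-1:ℝ) ^ s * (m.choose (2*s) : ℝ))).mul
    (((isHomogeneous_X ℝ (0 : Fin 2)).pow (m - 2*s)).mul ((isHomogeneous_X ℝ (1 : Fin 2)).pow (2*s)))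
  convert h1 using 1
  · rfl
  omega

lemma wodd_hom (m : ℕ) (hm : 1 ≤ m) : (Wodd ℝ m).IsHomogeneous m := by
  apply MvPolynomial.IsHomogeneous.sum
  intro s hs
  rw [Finset.mem_range] at hs
  have h1 := (isHomogeneous_C (Fin 2) ((-1:ℝ) ^ s * (m.choose (2*s+1) : ℝ))).mul
    (((isHomogeneous_X ℝ (0 : Fin 2)).pow (m - (2*s+1))).mul
      ((isHomogeneous_X ℝ (1 : Fin 2)).pow (2*s+1)))
  convert h1 using 1
  · rfl
  omega

lemma degree_fin2 (d : Fin 2 →₀ ℕ) : d.degree = d 0 + d 1 := by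
  show ∑ i ∈ d.support, d i = d 0 + d 1
  rw [Finset.sum_subset (Finset.subset_univ d.support)
    (fun i _ hi => Finsupp.notMem_support_iff.mp hi), Fin.sum_univ_two]

/-- for odd `k` the `k+1` polynomials `V_{k,j}^even, V_{k,j}^odd`
(`0 ≤ j ≤ ⌊k/2⌋`) form a basis of the space of degree-`k` homogeneous polynomials:
they are linearly independent and span `V[k]`. -/
theorem vfam_basis (k : ℕ) (hk : Odd k) :
    LinearIndependent ℝ (Vfam k) ∧
    Submodule.span ℝ (Set.range (Vfam k))
      = MvPolynomial.homogeneousSubmodule (Fin 2) ℝ k := by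
  have hk' : k % 2 = 1 := Nat.odd_iff.mp hk
  -- the ℝ-linear evaluation map
  set Ψ : MvPolynomial (Fin 2) ℝ →ₗ[ℝ] Polynomial ℂ :=
    (phi.toLinearMap.restrictScalars ℝ).comp
      ((MvPolynomial.mapAlgHom (σ := Fin 2) (Algebra.ofId ℝ ℂ)).toLinearMap) with hΨdef
  have hΨ : ∀ q, Ψ q = phi (MvPolynomial.map (algebraMap ℝ ℂ) q) := fun q => rfl
  -- coefficient computation
  have hco : ∀ (p : Fin (k / 2 + 1) × Bool) (j0 : Fin (k / 2 + 1)),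
      (Ψ (Vfam k p)).coeff j0
        = (if (p.1 : ℕ) = (j0 : ℕ) then
            ((2:ℂ) ^ (k-1) * (if p.2 then Complex.I else 1)) else 0) := by
    rintro ⟨j, b⟩ j0
    have hj : (j : ℕ) ≤ k / 2 := Nat.lt_succ_iff.mp j.isLt
    have hj0 : (j0 : ℕ) ≤ k / 2 := Nat.lt_succ_iff.mp j0.isLt
    have hne : k - (j : ℕ) ≠ (j0 : ℕ) := by omega
    cases b
    · simp only [Vfam, if_false, Bool.false_eq_true]
      rw [hΨ, psi_even k j hk' hj]
      rw [Polynomial.coeff_C_mul, Polynomial.coeff_add, Polynomial.coeff_X_pow,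
        Polynomial.coeff_X_pow, if_neg (show ¬(j0:ℕ) = k - (j:ℕ) by omega)]
      by_cases h : (j : ℕ) = (j0 : ℕ)
      · rw [if_pos h.symm, if_pos h]
        ring
      · rw [if_neg (fun hh => h hh.symm), if_neg h]
        ring
    · simp only [Vfam, if_true]
      rw [hΨ, psi_odd k j hk' hj]
      rw [Polynomial.coeff_C_mul, Polynomial.coeff_sub, Polynomial.coeff_X_pow,
        Polynomial.coeff_X_pow, if_neg (show ¬(j0:ℕ) = k - (j:ℕ) by omega)]
      by_cases h : (j : ℕ) = (j0 : ℕ)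
      · rw [if_pos h.symm, if_pos h]
        ring
      · rw [if_neg (fun hh => h hh.symm), if_neg h]
        ring
  -- linear independence
  have li : LinearIndependent ℝ (Vfam k) := by
    apply LinearIndependent.of_comp Ψ
    rw [Fintype.linearIndependent_iff]
    intro g hg
    have main : ∀ j0 : Fin (k / 2 + 1), g (j0, false) = 0 ∧ g (j0, true) = 0 := by
      intro j0
      have h0 := congrArg (fun q => Polynomial.coeff q j0) hg
      simp only [Function.comp_apply, Polynomial.finset_sum_coeff, Polynomial.coeff_smul,
        Polynomial.coeff_zero] at h0
      rw [Fintype.sum_prod_type] at h0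
      simp only [hco] at h0
      rw [Finset.sum_eq_single j0 (by
        intro b _ hb
        simp [Fin.val_eq_val, hb]) (by simp)] at h0
      simp only [if_pos rfl, Fintype.sum_bool, Bool.false_eq_true, if_true, if_false,
        Complex.real_smul, mul_one] at h0
      have h0' : ((g (j0, false) : ℂ) + (g (j0, true) : ℂ) * Complex.I) = 0 := by
        apply mul_left_cancel₀ (pow_ne_zero (k-1) (two_ne_zero (α := ℂ)))
        rw [mul_zero]
        linear_combination h0
      constructor
      · simpa using congrArg Complex.re h0'
      · simpa using congrArg Complex.im h0'
    rintro ⟨j0, b⟩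
    cases b
    · exact (main j0).1
    · exact (main j0).2
  refine ⟨li, ?_⟩
  -- membership of the family in the homogeneous submodule
  have hmem : ∀ p : Fin (k / 2 + 1) × Bool,
      Vfam k p ∈ homogeneousSubmodule (Fin 2) ℝ k := by
    rintro ⟨j, b⟩
    have hj : (j : ℕ) ≤ k / 2 := Nat.lt_succ_iff.mp j.isLt
    have hP : ((X 0 ^ 2 + X 1 ^ 2 : MvPolynomial (Fin 2) ℝ) ^ (j:ℕ)).IsHomogeneous (2 * (j:ℕ)) := by
      have := (((isHomogeneous_X ℝ (0 : Fin 2)).pow 2).add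
        ((isHomogeneous_X ℝ (1 : Fin 2)).pow 2)).pow (j : ℕ)
      convert this using 1
    rw [mem_homogeneousSubmodule]
    have hm : 1 ≤ k - 2 * (j:ℕ) := by omega
    cases b
    · simp only [Vfam, if_false, Bool.false_eq_true, Veven]
      have := hP.mul (weven_hom (k - 2 * (j:ℕ)))
      convert this using 1
      omega
    · simp only [Vfam, if_true, Vodd]
      have := hP.mul (wodd_hom (k - 2 * (j:ℕ)) hm)
      convert this using 1
      omega
  have hle : Submodule.span ℝ (Set.range (Vfam k)) ≤ homogeneousSubmodule (Fin 2) ℝ k := by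
    rw [Submodule.span_le]
    rintro x ⟨p, rfl⟩
    exact hmem p
  -- the monomial family spanning the homogeneous submodule
  set μ : Fin (k + 1) → MvPolynomial (Fin 2) ℝ :=
    fun m => monomial (Finsupp.single 0 (k - (m:ℕ)) + Finsupp.single 1 (m:ℕ)) 1 with hμ
  have hWle : homogeneousSubmodule (Fin 2) ℝ k ≤ Submodule.span ℝ (Set.range μ) := by
    rw [homogeneousSubmodule_eq_finsupp_supported, AddMonoidAlgebra.supported_eq_span_single,
      Submodule.span_le]
    rintro x ⟨d, hd, rfl⟩
    apply Submodule.subset_span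
    have hsum : d 0 + d 1 = k := by
      have := degree_fin2 d
      simp only [Set.mem_setOf_eq] at hd
      omega
    refine ⟨⟨d 1, by omega⟩, ?_⟩
    have hd2 : (Finsupp.single 0 (k - d 1) + Finsupp.single 1 (d 1) : Fin 2 →₀ ℕ) = d := by
      ext a
      fin_cases a <;> simp [Finsupp.single_apply, Finsupp.add_apply] <;> omega
    simp only [hμ, MvPolynomial.single_eq_monomial, hd2]
  haveI f1 : FiniteDimensional ℝ (Submodule.span ℝ (Set.range μ)) :=
    FiniteDimensional.span_of_finite ℝ (Set.finite_range μ)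
  haveI f2 : FiniteDimensional ℝ (homogeneousSubmodule (Fin 2) ℝ k) :=
    Submodule.finiteDimensional_of_le hWle
  have h1 : Module.finrank ℝ (Submodule.span ℝ (Set.range (Vfam k))) = k + 1 := by
    rw [finrank_span_eq_card li]
    simp only [Fintype.card_prod, Fintype.card_fin, Fintype.card_bool]
    omega
  have h2 : Module.finrank ℝ (homogeneousSubmodule (Fin 2) ℝ k) ≤ k + 1 := by
    refine le_trans (Submodule.finrank_mono hWle) (le_trans (finrank_range_le_card μ) ?_)
    simp
  exact Submodule.eq_of_le_of_finrank_le hle (h2.trans_eq h1.symm)
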